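/- arXiv:2411.07782 — 2 statements merged into one kernel-verified Lean document; each statement's English description precedes it below -/
import Mathlib

section
/- With D, s, A, B, C and the ED string T1 = X1·X2·X3 defined as in the triangle-detection construction (X1 contains v_i x̄ a^j whenever A[i, x·(D/s)+j] = 1; X2 contains a^{D/s−j} x̄ $ $ ȳ a^{D/s−k} whenever B[x·(D/s)+j, y·(D/s)+k] = 1; X3 contains a^k ȳ v_i whenever C[y·(D/s)+k, i] = 1), for every i ∈ [0,D) and x, y ∈ [0,s), the string P(i,x,y) = v_i x̄ a^{D/s} x̄ $ $ ȳ a^{D/s} ȳ v_i belongs to L(T1) if and only if there exist j, k ∈ [0, D/s) such that A[i, x·(D/s)+j] = B[x·(D/s)+j, y·(D/s)+k] = C[y·(D/s)+k, i] = 1. -/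
/-!
Apart from `a`, every letter of `P(i,x,y)` occurs at a fixed position between two runs of `a`s,
so a factorisation of `P(i,x,y)` into words of `X1`, `X2`, `X3` is forced by its letters `v_i`,
`x̄`, `ȳ`: the three words must carry the same `i`, `x`, `y`, and since each run of `a`s in
`P(i,x,y)` has length `D/s`, the `a`-runs `a^j · a^{D/s-j'}` and `a^{D/s-k'} · a^k` glue together
only when `j = j'` and `k = k'`.
-/

/-- The language of an elastic-degenerate string, given as the list of its segments
(each segment is a set of strings over the alphabet `α`). -/
def EDLang {α : Type*} : List (Set (List α)) → Set (List α)
  | [] => {[]}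
  | S :: rest => { w | ∃ s ∈ S, ∃ t ∈ EDLang rest, w = s ++ t }

/-- The alphabet of the triangle-detection construction: a letter `a`, a letter `$`,
letters `x̄` (for `x ∈ [0,s)`) and letters `v_i` (for `i ∈ [0,D)`); all pairwise distinct. -/
inductive TDLetter : Type
  | a : TDLetter
  | dollar : TDLetter
  | xbar : ℕ → TDLetter
  | vlet : ℕ → TDLetter
  deriving DecidableEq

/-- The string `P(i,x,y) = v_i x̄ a^{e} x̄ $ $ ȳ a^{e} ȳ v_i` (with `e = D/s`). -/
def Pstr (e i x y : ℕ) : List TDLetter :=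
  [TDLetter.vlet i, TDLetter.xbar x] ++ List.replicate e TDLetter.a ++
    [TDLetter.xbar x, TDLetter.dollar, TDLetter.dollar, TDLetter.xbar y] ++
    List.replicate e TDLetter.a ++ [TDLetter.xbar y, TDLetter.vlet i]

theorem List.replicate_append_cons_inj {α : Type*} {c b b' : α} {m n : ℕ} {u v : List α}
    (hb : b ≠ c) (hb' : b' ≠ c) :
    List.replicate m c ++ b :: u = List.replicate n c ++ b' :: v ↔ m = n ∧ b = b' ∧ u = v := by
  refine ⟨fun h => ?_, by rintro ⟨rfl, rfl, rfl⟩; rfl⟩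
  induction m generalizing n with
  | zero => cases n <;> simp_all [List.replicate_succ]
  | succ m ih => cases n <;> simp_all [List.replicate_succ]
theorem mem_EDLang_three {α : Type*} {S₁ S₂ S₃ : Set (List α)} {w : List α} :
    w ∈ EDLang [S₁, S₂, S₃] ↔ ∃ u ∈ S₁, ∃ v ∈ S₂, ∃ t ∈ S₃, w = u ++ v ++ t := by
  simp [EDLang, and_assoc]

/-- `leftWord`, `middleWord`, `rightWord` are the words of `X1`, `X2`, `X3`, with `e = D/s`. -/
def leftWord (i x j : ℕ) : List TDLetter :=
  [TDLetter.vlet i, TDLetter.xbar x] ++ List.replicate j TDLetter.a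

def middleWord (e x j y k : ℕ) : List TDLetter :=
  List.replicate (e - j) TDLetter.a ++
    [TDLetter.xbar x, TDLetter.dollar, TDLetter.dollar, TDLetter.xbar y] ++
    List.replicate (e - k) TDLetter.a

def rightWord (k y i : ℕ) : List TDLetter :=
  List.replicate k TDLetter.a ++ [TDLetter.xbar y, TDLetter.vlet i]

theorem Pstr_eq_append_iff {e i x y i₁ x₁ j₁ x₂ j₂ y₂ k₂ k₃ y₃ i₃ : ℕ}
    (hj₂ : j₂ ≤ e) (hk₂ : k₂ ≤ e) :
    Pstr e i x y = leftWord i₁ x₁ j₁ ++ middleWord e x₂ j₂ y₂ k₂ ++ rightWord k₃ y₃ i₃ ↔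
      i₁ = i ∧ x₁ = x ∧ j₁ = j₂ ∧ x₂ = x ∧ y₂ = y ∧ k₃ = k₂ ∧ y₃ = y ∧ i₃ = i := by
  simp only [Pstr, leftWord, middleWord, rightWord, List.append_assoc, List.cons_append,
    List.nil_append, List.cons.injEq, TDLetter.vlet.injEq, TDLetter.xbar.injEq]
  rw [← List.append_assoc (List.replicate j₁ _), ← List.replicate_add,
    List.replicate_append_cons_inj (by simp) (by simp),
    ← List.append_assoc (List.replicate (e - k₂) _), ← List.replicate_add]
  simp only [List.cons.injEq, TDLetter.xbar.injEq, true_and]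
  rw [List.replicate_append_cons_inj (by simp) (by simp)]
  simp only [List.cons.injEq, TDLetter.xbar.injEq, TDLetter.vlet.injEq, and_true]
  omega

theorem Pstr_mem_iff_general (D s : ℕ)
    (A B C : ℕ → ℕ → Bool) (X1 X2 X3 : Set (List TDLetter))
    (hX1 : X1 = { w | ∃ i x j : ℕ, i < D ∧ x < s ∧ j < D / s ∧
      A i (x * (D / s) + j) = true ∧
      w = [TDLetter.vlet i, TDLetter.xbar x] ++ List.replicate j TDLetter.a })
    (hX2 : X2 = { w | ∃ x j y k : ℕ, x < s ∧ j < D / s ∧ y < s ∧ k < D / s ∧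
      B (x * (D / s) + j) (y * (D / s) + k) = true ∧
      w = List.replicate (D / s - j) TDLetter.a ++
        [TDLetter.xbar x, TDLetter.dollar, TDLetter.dollar, TDLetter.xbar y] ++
        List.replicate (D / s - k) TDLetter.a })
    (hX3 : X3 = { w | ∃ y k i : ℕ, y < s ∧ k < D / s ∧ i < D ∧
      C (y * (D / s) + k) i = true ∧
      w = List.replicate k TDLetter.a ++ [TDLetter.xbar y, TDLetter.vlet i] })
    (i x y : ℕ) (hi : i < D) (hx : x < s) (hy : y < s) :
    Pstr (D / s) i x y ∈ EDLang [X1, X2, X3] ↔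
      ∃ j k : ℕ, j < D / s ∧ k < D / s ∧
        A i (x * (D / s) + j) = true ∧
        B (x * (D / s) + j) (y * (D / s) + k) = true ∧
        C (y * (D / s) + k) i = true := by
  rw [mem_EDLang_three, hX1, hX2, hX3]
  constructor
  · rintro ⟨_, ⟨i₁, x₁, j₁, -, -, -, hA, rfl⟩, _, ⟨x₂, j, y₂, k, -, hj, -, hk, hB, rfl⟩,
      _, ⟨y₃, k₃, i₃, -, -, -, hC, rfl⟩, hP⟩
    obtain ⟨rfl, rfl, rfl, rfl, rfl, rfl, rfl, rfl⟩ := (Pstr_eq_append_iff hj.le hk.le).1 hP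
    exact ⟨j₁, k₃, hj, hk, hA, hB, hC⟩
  · rintro ⟨j, k, hj, hk, hA, hB, hC⟩
    exact ⟨_, ⟨i, x, j, hi, hx, hj, hA, rfl⟩, _, ⟨x, j, y, k, hx, hj, hy, hk, hB, rfl⟩,
      _, ⟨y, k, i, hy, hk, hi, hC, rfl⟩,
      (Pstr_eq_append_iff hj.le hk.le).2 ⟨rfl, rfl, rfl, rfl, rfl, rfl, rfl, rfl⟩⟩

/-- In the triangle-detection construction with `T1 = X1 · X2 · X3`, the string `P(i,x,y)`
belongs to `L(T1)` iff there are `j, k ∈ [0, D/s)` with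
`A[i, x·(D/s)+j] = B[x·(D/s)+j, y·(D/s)+k] = C[y·(D/s)+k, i] = 1`. -/
theorem Pstr_mem_iff (D s : ℕ) (hD : 1 ≤ D) (hs1 : 1 ≤ s) (hsD : s ≤ D) (hdvd : s ∣ D)
    (A B C : ℕ → ℕ → Bool) (X1 X2 X3 : Set (List TDLetter))
    (hX1 : X1 = { w | ∃ i x j : ℕ, i < D ∧ x < s ∧ j < D / s ∧
      A i (x * (D / s) + j) = true ∧
      w = [TDLetter.vlet i, TDLetter.xbar x] ++ List.replicate j TDLetter.a })
    (hX2 : X2 = { w | ∃ x j y k : ℕ, x < s ∧ j < D / s ∧ y < s ∧ k < D / s ∧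
      B (x * (D / s) + j) (y * (D / s) + k) = true ∧
      w = List.replicate (D / s - j) TDLetter.a ++
        [TDLetter.xbar x, TDLetter.dollar, TDLetter.dollar, TDLetter.xbar y] ++
        List.replicate (D / s - k) TDLetter.a })
    (hX3 : X3 = { w | ∃ y k i : ℕ, y < s ∧ k < D / s ∧ i < D ∧
      C (y * (D / s) + k) i = true ∧
      w = List.replicate k TDLetter.a ++ [TDLetter.xbar y, TDLetter.vlet i] })
    (i x y : ℕ) (hi : i < D) (hx : x < s) (hy : y < s) :
    Pstr (D / s) i x y ∈ EDLang [X1, X2, X3] ↔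
      ∃ j k : ℕ, j < D / s ∧ k < D / s ∧
        A i (x * (D / s) + j) = true ∧
        B (x * (D / s) + j) (y * (D / s) + k) = true ∧
        C (y * (D / s) + k) i = true :=
  Pstr_mem_iff_general D s A B C X1 X2 X3 hX1 hX2 hX3 i x y hi hx hy
end

section
/- Let b₁, …, bₙ and c be non-negative integers and let a be a letter. Define the unary ED strings T1 with T1[i] = { a^{bᵢ}, ε } for all i ∈ [1,n], and T2 of length 1 with T2[1] = { a^c }. Then L(T1) ∩ L(T2) is nonempty if and only if there exist x₁, …, xₙ ∈ {0,1} such that Σ_{i=1}^{n} xᵢ·bᵢ = c. -/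
@[simp]
theorem EDLang_singleton {α : Type*} (S : Set (List α)) : EDLang [S] = S := by
  ext w
  simp [EDLang]

theorem mem_EDLang_ofFn_iff {α : Type*} {n : ℕ} (S : Fin n → Set (List α)) (w : List α) :
    w ∈ EDLang (List.ofFn S) ↔
      ∃ s : Fin n → List α, (∀ i, s i ∈ S i) ∧ w = (List.ofFn s).flatten := by
  induction n generalizing w with
  | zero => simp [EDLang]
  | succ n ih =>
    simp only [List.ofFn_succ, EDLang, Set.mem_ofPred_eq, ih, List.flatten_cons]
    constructor
    · rintro ⟨s₀, hs₀, _, ⟨s, hs, rfl⟩, rfl⟩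
      exact ⟨Fin.cons s₀ s, Fin.cases hs₀ hs, by simp⟩
    · rintro ⟨s, hs, rfl⟩
      exact ⟨s 0, hs 0, _, ⟨fun i => s i.succ, fun i => hs i.succ, rfl⟩, rfl⟩

theorem List.flatten_ofFn_replicate {α : Type*} {n : ℕ} (f : Fin n → ℕ) (a : α) :
    (List.ofFn fun i => List.replicate (f i) a).flatten = List.replicate (∑ i, f i) a := by
  induction n with
  | zero => simp
  | succ n ih => simp [List.ofFn_succ, ih, Fin.sum_univ_succ]

theorem mem_pair_replicate_nil_iff {α : Type*} (k : ℕ) (a : α) (s : List α) :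
    s ∈ ({List.replicate k a, []} : Set (List α)) ↔
      ∃ e : Fin 2, s = List.replicate (e * k) a := by
  simp [Fin.exists_fin_two, or_comm]

theorem mem_EDLang_ofFn_pair_replicate_nil_iff {α : Type*} {n : ℕ} (b : Fin n → ℕ) (a : α)
    (w : List α) :
    w ∈ EDLang (List.ofFn fun i => ({List.replicate (b i) a, []} : Set (List α))) ↔
      ∃ x : Fin n → Fin 2, w = List.replicate (∑ i, (x i : ℕ) * b i) a := by
  simp only [mem_EDLang_ofFn_iff, mem_pair_replicate_nil_iff, Classical.skolem]
  constructor
  · rintro ⟨s, ⟨x, hx⟩, rfl⟩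
    obtain rfl : s = _ := funext hx
    exact ⟨x, List.flatten_ofFn_replicate _ a⟩
  · rintro ⟨x, rfl⟩
    exact ⟨_, ⟨x, fun _ => rfl⟩, (List.flatten_ofFn_replicate _ a).symm⟩

/-- Subset-Sum reduction: for non-negative integers `b 0, …, b (n-1)` and `c`, the unary
ED strings `T1` with `T1[i] = {a^{b i}, ε}` and `T2 = ({a^c})` (over the one-letter
alphabet `Unit`) have intersecting languages iff some subset of the `b i` sums to `c`. -/
theorem subsetSum_reduction (n : ℕ) (b : Fin n → ℕ) (c : ℕ) :
    (EDLang ((List.finRange n).map fun i =>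
        ({List.replicate (b i) (), ([] : List Unit)} : Set (List Unit))) ∩
      EDLang [({List.replicate c ()} : Set (List Unit))]).Nonempty ↔
      ∃ x : Fin n → Fin 2, ∑ i : Fin n, (x i : ℕ) * b i = c := by
  rw [EDLang_singleton, Set.inter_singleton_nonempty, ← List.ofFn_eq_map,
    mem_EDLang_ofFn_pair_replicate_nil_iff]
  simp only [List.replicate_left_inj, eq_comm]
end
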